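/- arXiv:2009.01834 — 6 statements merged into one kernel-verified Lean document; each statement's English description precedes it below -/
import Mathlib

section
/- For any domain Ω ⊆ ℂ and n ≥ 2, the set S_n(Ω) of n×n complex matrices whose spectrum (set of eigenvalues) is contained in Ω is an open and connected subset of the space of n×n complex matrices. -/
/-! Openness is the upper hemicontinuity of the spectrum in a Banach algebra, applied to matrices
with the `L∞` operator norm. For connectedness, join every eigenvalue `λ` of `A` to a base point
`z₀` by a path `γ_λ` in `Ω`, and let `p_t` be `(1 - t) X + t z₀` plus the Lagrange interpolant that
corrects its values at the eigenvalues to `γ_λ(t)`. Then `p_0 = X`, `p_1 = z₀`, and by the spectral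
mapping theorem `σ(p_t(A)) = p_t(σ(A)) = {γ_λ(t)} ⊆ Ω`, so `t ↦ p_t(A)` is a path from `A` to the
scalar matrix `z₀` that stays in `S_n(Ω)`. -/

open Polynomial

theorem spectrum.polynomial_aeval_subset {𝕜 A : Type*} [Field 𝕜] [IsAlgClosed 𝕜] [Ring A]
    [Algebra 𝕜 A] [FiniteDimensional 𝕜 A] (a : A) (p : 𝕜[X]) :
    spectrum 𝕜 (aeval a p) ⊆ (eval · p) '' spectrum 𝕜 a := by
  rcases subsingleton_or_nontrivial A with _ | _
  · simp [spectrum.of_subsingleton]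
  · rw [spectrum.map_polynomial_aeval_of_nonempty a p
      (spectrum.nonempty_of_isAlgClosed_of_finiteDimensional 𝕜 a)]

theorem spectrum.algebraMap_subset_singleton {𝕜 A : Type*} [Field 𝕜] [Ring A] [Algebra 𝕜 A]
    (k : 𝕜) : spectrum 𝕜 (algebraMap 𝕜 A k) ⊆ {k} := by
  rcases subsingleton_or_nontrivial A with _ | _
  · simp [spectrum.of_subsingleton]
  · rw [spectrum.scalar_eq]

theorem isOpen_setOf_spectrum_subset {𝕜 A : Type*} [NormedField 𝕜] [ProperSpace 𝕜]
    [NormedRing A] [NormedAlgebra 𝕜 A] [CompleteSpace A] {U : Set 𝕜} (hU : IsOpen U) :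
    IsOpen {a : A | spectrum 𝕜 a ⊆ U} :=
  isOpen_iff_mem_nhds.mpr fun a ha => (upperHemicontinuous_spectrum 𝕜 A).forall_isOpen a U hU ha

namespace Matrix

variable {n : Type*} [Fintype n] [DecidableEq n]

theorem isOpen_setOf_spectrum_subset {𝕜 : Type*} [NormedField 𝕜] [ProperSpace 𝕜] {U : Set 𝕜}
    (hU : IsOpen U) : IsOpen {A : Matrix n n 𝕜 | spectrum 𝕜 A ⊆ U} := by
  -- synthesized for the product uniformity, which the operator norm below induces definitionally
  have hcomplete : CompleteSpace (Matrix n n 𝕜) := inferInstance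
  let := Matrix.linftyOpNormedRing (n := n) (α := 𝕜)
  let := Matrix.linftyOpNormedAlgebra (n := n) (R := 𝕜) (α := 𝕜)
  exact @_root_.isOpen_setOf_spectrum_subset _ _ _ _ _ _ hcomplete _ hU

theorem joinedIn_algebraMap_of_spectrum_subset {Ω : Set ℂ} (hΩ : IsPathConnected Ω) {z₀ : ℂ}
    (hz₀ : z₀ ∈ Ω) {A : Matrix n n ℂ} (hA : spectrum ℂ A ⊆ Ω) :
    JoinedIn {B : Matrix n n ℂ | spectrum ℂ B ⊆ Ω} A (algebraMap ℂ _ z₀) := by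
  let ι := spectrum ℂ A
  let : Fintype ι := Fintype.ofFinite ι
  let γ (i : ι) : Path (i : ℂ) z₀ := (hΩ.joinedIn _ (hA i.2) _ hz₀).somePath
  let r (t : unitInterval) (i : ι) : ℂ := γ i t - ((1 - t : ℝ) * i + (t : ℝ) * z₀)
  let p (t : unitInterval) : ℂ[X] :=
    C ((1 - t : ℝ) : ℂ) * X + C ((t : ℝ) * z₀) + Lagrange.interpolate Finset.univ Subtype.val (r t)
  have hr_zero : r 0 = 0 := by funext i; simp [r, γ]
  have hr_one : r 1 = 0 := by funext i; simp [r, γ]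
  have hp_eval (t : unitInterval) (i : ι) : (p t).eval (i : ℂ) = γ i t := by
    simp only [p, eval_add, eval_mul, eval_C, eval_X,
      Lagrange.eval_interpolate_at_node _ Subtype.val_injective.injOn (Finset.mem_univ i), r]
    ring
  have hp_cont : Continuous fun t => aeval A (p t) := by
    have hr_cont : Continuous r := by fun_prop
    have hinterp := (((aeval A).toLinearMap ∘ₗ Lagrange.interpolate Finset.univ Subtype.val)
      |>.continuous_of_finiteDimensional).comp hr_cont
    simp only [p, map_add, map_mul, aeval_C, aeval_X]
    refine Continuous.add ?_ hinterp
    have halg := continuous_algebraMap ℂ (Matrix n n ℂ)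
    fun_prop
  refine ⟨⟨⟨fun t => aeval A (p t), hp_cont⟩, by simp [p, hr_zero], by simp [p, hr_one]⟩,
    fun t => ?_⟩
  refine (spectrum.polynomial_aeval_subset A (p t)).trans ?_
  rintro _ ⟨z, hz, rfl⟩
  simpa [hp_eval t ⟨z, hz⟩] using JoinedIn.somePath_mem _ t

theorem isPathConnected_setOf_spectrum_subset {Ω : Set ℂ} (hΩ : IsPathConnected Ω) :
    IsPathConnected {A : Matrix n n ℂ | spectrum ℂ A ⊆ Ω} := by
  obtain ⟨z₀, hz₀⟩ := hΩ.nonempty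
  exact ⟨algebraMap ℂ _ z₀,
    (spectrum.algebraMap_subset_singleton z₀).trans (Set.singleton_subset_iff.mpr hz₀),
    fun _ hA => (joinedIn_algebraMap_of_spectrum_subset hΩ hz₀ hA).symm⟩

end Matrix

theorem matricial_domain_isOpen_isConnected_general
    (Ω : Set ℂ) (hΩo : IsOpen Ω) (hΩc : IsConnected Ω)
    (n : ℕ) :
    IsOpen {A : Matrix (Fin n) (Fin n) ℂ | spectrum ℂ A ⊆ Ω} ∧
      IsConnected {A : Matrix (Fin n) (Fin n) ℂ | spectrum ℂ A ⊆ Ω} :=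
  ⟨Matrix.isOpen_setOf_spectrum_subset hΩo,
    (Matrix.isPathConnected_setOf_spectrum_subset
      (hΩo.isConnected_iff_isPathConnected.mp hΩc)).isConnected⟩

/-- For any domain `Ω ⊆ ℂ` and `n ≥ 2`, the set
`S_n(Ω) = {A ∈ M_n(ℂ) : σ(A) ⊆ Ω}` is open and connected in `M_n(ℂ)`. -/
theorem matricial_domain_isOpen_isConnected
    (Ω : Set ℂ) (hΩo : IsOpen Ω) (hΩc : IsConnected Ω)
    (n : ℕ) (hn : 2 ≤ n) :
    IsOpen {A : Matrix (Fin n) (Fin n) ℂ | spectrum ℂ A ⊆ Ω} ∧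
      IsConnected {A : Matrix (Fin n) (Fin n) ℂ | spectrum ℂ A ⊆ Ω} :=
  matricial_domain_isOpen_isConnected_general Ω hΩo hΩc n
end

section
/- For any matrix A ∈ M_n(ℂ) there exist a diagonal matrix D with the same characteristic polynomial as A, a matrix C ∈ M_n(ℂ), and a strictly upper triangular matrix U, such that A = exp(-C)(D + U)exp(C). Moreover, for every ζ ∈ ℂ, the matrix f(ζ) := exp(-Cζ)(D + ζU)exp(Cζ) has the same characteristic polynomial as A. -/
/-!
Schur's theorem gives a unitary `P` with `T = Pᴴ A P` upper triangular. A unitary matrix is normal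
and invertible, so the continuous functional calculus provides a logarithm `C₀ = log P` with
`exp C₀ = P`; taking `C = -C₀`, `D = diag T` and `U = T - D` gives `A = exp (-C) (D + U) exp C`.
For every `ζ` the matrix `D + ζ U` is still upper triangular with diagonal `D`, and conjugating by
`exp (ζ C)` does not change the characteristic polynomial.
-/

open Module NormedSpace
open scoped InnerProductSpace

theorem Module.End.exists_orthonormalBasis_inner_apply_eq_zero_of_lt
    {E : Type*} [NormedAddCommGroup E] [InnerProductSpace ℂ E] [FiniteDimensional ℂ E]
    {d : ℕ} (hd : finrank ℂ E = d) (T : End ℂ E) :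
    ∃ b : OrthonormalBasis (Fin d) ℂ E, ∀ i j, j < i → ⟪b i, T (b j)⟫_ℂ = 0 := by
  induction d generalizing E with
  | zero => exact ⟨(stdOrthonormalBasis ℂ E).reindex (finCongr hd), fun i => i.elim0⟩
  | succ d ih =>
    have : Nontrivial E := Module.nontrivial_of_finrank_eq_succ hd
    have : Fact (finrank ℂ E = d + 1) := ⟨hd⟩
    -- A unit eigenvector `v` of the adjoint has a `T`-invariant orthogonal complement,
    -- so `v` can be appended as the last basis vector.
    obtain ⟨μ, hμ⟩ := End.exists_eigenvalue (LinearMap.adjoint T)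
    obtain ⟨v₀, hv₀⟩ := hμ.exists_hasEigenvector
    set v : E := (‖v₀‖⁻¹ : ℂ) • v₀
    have hv : LinearMap.adjoint T v = μ • v := by
      rw [map_smul, hv₀.apply_eq_smul, smul_comm]
    have hv1 : ‖v‖ = 1 := by simp [v, norm_smul, hv₀.2]
    set W := (ℂ ∙ v)ᗮ
    have hvW : ∀ w : W, ⟪v, (w : E)⟫_ℂ = 0 := fun w =>
      Submodule.mem_orthogonal_singleton_iff_inner_right.mp w.2
    have hW : ∀ w ∈ W, T w ∈ W := fun w hw => by
      rw [Submodule.mem_orthogonal_singleton_iff_inner_right] at hw ⊢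
      rw [← LinearMap.adjoint_inner_left, hv, inner_smul_left, hw, mul_zero]
    obtain ⟨b', hb'⟩ := ih (Submodule.finrank_orthogonal_span_singleton
      (norm_ne_zero_iff.mp (hv1.trans_ne one_ne_zero))) (T.restrict hW)
    let f : Fin (d + 1) → E := Fin.snoc (α := fun _ => E) (fun i => (b' i : E)) v
    have hf : Orthonormal ℂ f := by
      rw [orthonormal_iff_ite]
      intro i j
      induction i using Fin.lastCases <;> induction j using Fin.lastCases <;>
        simp [f, hvW, fun w => inner_eq_zero_symm.mp (hvW w), inner_self_eq_norm_sq_to_K, hv1,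
          ← Submodule.coe_inner, orthonormal_iff_ite.mp b'.orthonormal, Fin.castSucc_ne_last,
          (Fin.castSucc_ne_last _).symm]
    have hspan := hf.linearIndependent.span_eq_top_of_card_eq_finrank (by simp [hd])
    refine ⟨OrthonormalBasis.mk hf hspan.ge, fun i j hji => ?_⟩
    simp only [OrthonormalBasis.coe_mk]
    induction j using Fin.lastCases with
    | last => exact absurd hji (not_lt.mpr (Fin.le_last i))
    | cast j =>
      induction i using Fin.lastCases with
      | last => simpa [f] using hvW ⟨_, hW _ (b' j).2⟩
      | cast i =>
        have := hb' i j (Fin.castSucc_lt_castSucc_iff.mp hji)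
        rw [Submodule.coe_inner, LinearMap.coe_restrict_apply] at this
        simpa [f] using this

theorem Matrix.exists_mem_unitaryGroup_isUpperTriangular {n : ℕ}
    (A : Matrix (Fin n) (Fin n) ℂ) :
    ∃ P ∈ Matrix.unitaryGroup (Fin n) ℂ, (star P * A * P).IsUpperTriangular := by
  obtain ⟨b, hb⟩ := End.exists_orthonormalBasis_inner_apply_eq_zero_of_lt
    finrank_euclideanSpace_fin (Matrix.toLpLin 2 2 A)
  refine ⟨(EuclideanSpace.basisFun (Fin n) ℂ).toBasis.toMatrix b,
    OrthonormalBasis.toMatrix_orthonormalBasis_mem_unitary _ _, fun i j hji => ?_⟩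
  rw [← hb i j hji]
  simp only [Matrix.mul_apply, Matrix.star_apply, Basis.toMatrix_apply,
    OrthonormalBasis.coe_toBasis_repr_apply, EuclideanSpace.basisFun_repr, PiLp.inner_apply,
    Matrix.ofLp_toLpLin, Matrix.toLin'_apply, Matrix.mulVec, dotProduct, Finset.sum_mul,
    RCLike.inner_apply, RCLike.star_def]
  rw [Finset.sum_comm]
  congr! 2
  ring

theorem Matrix.exists_exp_eq_of_isStarNormal {n : Type*} [Fintype n] [DecidableEq n]
    (U : Matrix n n ℂ) [IsStarNormal U] (hU : IsUnit U) :
    ∃ C : Matrix n n ℂ, exp C = U := by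
  open scoped Matrix.Norms.L2Operator in
  refine ⟨cfc Complex.log U, ?_⟩
  -- `log` is discontinuous, but only its values on the finite spectrum matter.
  have hlog : ContinuousOn Complex.log (spectrum ℂ U) := U.finite_spectrum.continuousOn _
  rw [← CFC.complex_exp_eq_normedSpace_exp, ← cfc_comp' Complex.exp Complex.log U]
  conv_rhs => rw [← cfc_id' ℂ U]
  refine cfc_congr fun z hz => Complex.exp_log ?_
  rintro rfl
  exact spectrum.zero_notMem ℂ hU hz

theorem Matrix.charpoly_exp_neg_mul_mul_exp {n 𝔸 : Type*} [Fintype n] [DecidableEq n]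
    [NormedCommRing 𝔸] [NormedAlgebra ℚ 𝔸] [CompleteSpace 𝔸] (C N : Matrix n n 𝔸) :
    (exp (-C) * N * exp C).charpoly = N.charpoly := by
  obtain ⟨u, hu⟩ := Matrix.isUnit_exp C
  rw [Matrix.exp_neg, ← hu, Matrix.charpoly_units_conj']

theorem Matrix.IsUpperTriangular.charpoly_diagonal_diag_add_smul {n R : Type*} [Fintype n]
    [DecidableEq n] [LinearOrder n] [CommRing R] {T : Matrix n n R} (hT : T.IsUpperTriangular)
    (ζ : R) :
    (Matrix.diagonal T.diag + ζ • (T - Matrix.diagonal T.diag)).charpoly = T.charpoly := by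
  have h : (Matrix.diagonal T.diag + ζ • (T - Matrix.diagonal T.diag)).IsUpperTriangular :=
    fun i j (hji : j < i) => by simp [hT hji, Matrix.diagonal_apply_ne _ hji.ne']
  rw [Matrix.charpoly_of_isUpperTriangular _ h, Matrix.charpoly_of_isUpperTriangular _ hT]
  simp

/-- every `A ∈ M_n(ℂ)` can be written as
`A = exp(-C)(D + U)exp(C)` with `D` diagonal having the same characteristic
polynomial as `A`, and `U` strictly upper triangular; moreover the entire curve
`ζ ↦ exp(-Cζ)(D + ζU)exp(Cζ)` has constant characteristic polynomial equal to
that of `A`. -/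
theorem exists_conjugation_to_diagonal_plus_nilpotent
    {n : ℕ} (A : Matrix (Fin n) (Fin n) ℂ) :
    ∃ (d : Fin n → ℂ) (C U : Matrix (Fin n) (Fin n) ℂ),
      (Matrix.diagonal d).charpoly = A.charpoly ∧
      (∀ i j : Fin n, j ≤ i → U i j = 0) ∧
      A = exp (-C) * (Matrix.diagonal d + U) * exp C ∧
      ∀ ζ : ℂ,
        (exp (-(ζ • C)) * (Matrix.diagonal d + ζ • U) * exp (ζ • C)).charpoly
          = A.charpoly := by
  obtain ⟨P, hP, hT⟩ := A.exists_mem_unitaryGroup_isUpperTriangular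
  have : IsStarNormal P := isStarNormal_of_mem_unitary hP
  obtain ⟨C₀, hC₀⟩ :=
    P.exists_exp_eq_of_isStarNormal (Unitary.isUnit_coe (U := ⟨P, hP⟩))
  have hexp_neg : exp (-C₀) = star P := by
    rw [Matrix.exp_neg, hC₀, Matrix.inv_eq_left_inv (Unitary.star_mul_self_of_mem hP)]
  have hA : (star P * A * P).charpoly = A.charpoly := by
    rw [mul_assoc, Matrix.charpoly_mul_comm, mul_assoc, Unitary.mul_star_self_of_mem hP,
      mul_one]
  set T := star P * A * P
  set D := Matrix.diagonal T.diag
  have hcurve : ∀ ζ : ℂ,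
      (exp (-(ζ • -C₀)) * (D + ζ • (T - D)) * exp (ζ • -C₀)).charpoly = A.charpoly := by
    intro ζ
    rw [Matrix.charpoly_exp_neg_mul_mul_exp, hT.charpoly_diagonal_diag_add_smul, hA]
  refine ⟨T.diag, -C₀, T - D, by simpa using hcurve 0, ?_, ?_, hcurve⟩
  · intro i j hji
    rcases hji.lt_or_eq with hji | rfl
    · simp [D, hT hji, Matrix.diagonal_apply_ne _ hji.ne']
    · simp [D]
  · rw [add_sub_cancel, neg_neg, hC₀, hexp_neg]
    simp only [T, ← mul_assoc, Unitary.mul_star_self_of_mem hP, one_mul]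
    rw [mul_assoc, Unitary.mul_star_self_of_mem hP, mul_one]
end

section
/- Let F : 𝔻 → Ω_n be a holomorphic map into the spectral unit ball with F(0) = 0. Then there exists a holomorphic map G : 𝔻 → M_n(ℂ) with spectral radius ρ(G(ζ)) ≤ 1 for all ζ, such that F(ζ) = ζ·G(ζ) for all ζ ∈ 𝔻. In particular, ρ(F(ζ)) ≤ |ζ| for all ζ ∈ 𝔻. -/
open Metric Polynomial Matrix Finset

attribute [local instance] Matrix.normedAddCommGroup Matrix.normedSpace

namespace SchwarzSpec

variable {n : ℕ}

lemma eval_charpoly' (A : Matrix (Fin n) (Fin n) ℂ) (r : ℂ) :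
    (Matrix.charpoly A).eval r = (Matrix.scalar (Fin n) r - A).det := by
  rw [Matrix.charpoly, _root_.eval_det, matPolyEquiv_charmatrix]
  simp

lemma mem_spectrum_iff_root (A : Matrix (Fin n) (Fin n) ℂ) (μ : ℂ) :
    μ ∈ spectrum ℂ A ↔ (Matrix.charpoly A).eval μ = 0 := by
  rw [spectrum.mem_iff, eval_charpoly',
    show (algebraMap ℂ (Matrix (Fin n) (Fin n) ℂ)) μ = Matrix.scalar (Fin n) μ from rfl,
    Matrix.isUnit_iff_isUnit_det, isUnit_iff_ne_zero, not_not]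

noncomputable def Kc (n k : ℕ) : ℝ :=
  ∑ j ∈ Finset.range (n+1),
    ‖(Lagrange.basis (Finset.range (n+1)) (fun j : ℕ => (j:ℂ)) j).coeff k‖

lemma Kc_nonneg (n k : ℕ) : 0 ≤ Kc n k :=
  Finset.sum_nonneg fun _ _ => norm_nonneg _

lemma coeff_charpoly_eq_sum (A : Matrix (Fin n) (Fin n) ℂ) (k : ℕ) :
    (Matrix.charpoly A).coeff k
      = ∑ j ∈ Finset.range (n+1), (Matrix.charpoly A).eval (j:ℂ) *
          (Lagrange.basis (Finset.range (n+1)) (fun j : ℕ => (j:ℂ)) j).coeff k := by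
  have hinj : Set.InjOn (fun j : ℕ => (j:ℂ)) (Finset.range (n+1)) :=
    fun a _ b _ h => Nat.cast_injective h
  have hdeg : (Matrix.charpoly A).degree < #(Finset.range (n+1)) := by
    rw [Matrix.charpoly_degree_eq_dim, Fintype.card_fin, Finset.card_range]
    exact_mod_cast Nat.lt_succ_self n
  conv_lhs => rw [Lagrange.eq_interpolate hinj hdeg]
  rw [Lagrange.interpolate_apply, Polynomial.finset_sum_coeff]
  exact Finset.sum_congr rfl fun j _ => by rw [Polynomial.coeff_C_mul]

lemma multiset_prod_norm_le {m : Multiset ℂ} {c : ℝ} (hc : 0 ≤ c) (h : ∀ x ∈ m, ‖x‖ ≤ c) :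
    ‖m.prod‖ ≤ c ^ (Multiset.card m) := by
  induction m using Multiset.induction with
  | empty => simp
  | cons a t ih =>
      rw [Multiset.prod_cons, norm_mul, Multiset.card_cons, pow_succ']
      exact mul_le_mul (h a (Multiset.mem_cons_self a t))
        (ih fun x hx => h x (Multiset.mem_cons_of_mem hx)) (norm_nonneg _)
        hc

lemma norm_coeff_charpoly_le (A : Matrix (Fin n) (Fin n) ℂ) {B : ℝ} (hB : 1 ≤ B)
    (hspec : ∀ μ ∈ spectrum ℂ A, ‖μ‖ ≤ B) (k : ℕ) :
    ‖(Matrix.charpoly A).coeff k‖ ≤ ((n+1:ℝ)^n * Kc n k) * B ^ n := by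
  have hB0 : (0:ℝ) ≤ B := le_trans zero_le_one hB
  set p := Matrix.charpoly A with hp
  have hmon : p.Monic := Matrix.charpoly_monic A
  have hsplit : p.Splits := IsAlgClosed.splits p
  have hprod : p = (p.roots.map fun a => X - C a).prod :=
    hsplit.eq_prod_roots_of_monic hmon
  have hcard : Multiset.card p.roots = n := by
    rw [splits_iff_card_roots.mp hsplit, hp, Matrix.charpoly_natDegree_eq_dim, Fintype.card_fin]
  have heval : ∀ j : ℕ, j ∈ Finset.range (n+1) → ‖p.eval (j:ℂ)‖ ≤ (n+1:ℝ)^n * B ^ n := by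
    intro j hj
    have hj' : (j:ℝ) ≤ n := by
      exact_mod_cast Nat.lt_succ_iff.mp (Finset.mem_range.mp hj)
    have : p.eval (j:ℂ) = ((p.roots.map fun a => (j:ℂ) - a)).prod := by
      conv_lhs => rw [hprod]
      rw [eval_multiset_prod, Multiset.map_map]
      simp
    rw [this]
    have hb : ∀ x ∈ p.roots.map fun a => (j:ℂ) - a, ‖x‖ ≤ (n+1:ℝ) * B := by
      intro x hx
      obtain ⟨a, ha, rfl⟩ := Multiset.mem_map.mp hx
      have haspec : ‖a‖ ≤ B := by
        apply hspec
        rw [mem_spectrum_iff_root]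
        exact (Polynomial.mem_roots (hmon.ne_zero)).mp ha
      calc ‖(j:ℂ) - a‖ ≤ ‖(j:ℂ)‖ + ‖a‖ := norm_sub_le _ _
        _ ≤ (n:ℝ) + B := by
            rw [Complex.norm_natCast]
            exact add_le_add hj' haspec
        _ ≤ (n+1:ℝ) * B := by nlinarith
    calc ‖((p.roots.map fun a => (j:ℂ) - a)).prod‖
        ≤ ((n+1:ℝ) * B) ^ (Multiset.card (p.roots.map fun a => (j:ℂ) - a)) :=
          multiset_prod_norm_le (by positivity) hb
      _ = ((n+1:ℝ) * B) ^ n := by rw [Multiset.card_map, hcard]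
      _ = (n+1:ℝ)^n * B ^ n := mul_pow _ _ _
  rw [coeff_charpoly_eq_sum]
  calc ‖∑ j ∈ Finset.range (n+1), p.eval (j:ℂ) *
          (Lagrange.basis (Finset.range (n+1)) (fun j : ℕ => (j:ℂ)) j).coeff k‖
      ≤ ∑ j ∈ Finset.range (n+1), ‖p.eval (j:ℂ)‖ *
          ‖(Lagrange.basis (Finset.range (n+1)) (fun j : ℕ => (j:ℂ)) j).coeff k‖ := by
        refine (norm_sum_le _ _).trans ?_
        refine le_of_eq (Finset.sum_congr rfl fun j _ => norm_mul _ _)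
    _ ≤ ∑ j ∈ Finset.range (n+1), ((n+1:ℝ)^n * B^n) *
          ‖(Lagrange.basis (Finset.range (n+1)) (fun j : ℕ => (j:ℂ)) j).coeff k‖ := by
        refine Finset.sum_le_sum fun j hj => ?_
        exact mul_le_mul_of_nonneg_right (heval j hj) (norm_nonneg _)
    _ = ((n+1:ℝ)^n * Kc n k) * B ^ n := by
        rw [← Finset.mul_sum, Kc]; ring

lemma root_norm_le {p : ℂ[X]} (hm : p.Monic) {C : ℝ}
    (hcoeff : ∀ k, k < p.natDegree → ‖p.coeff k‖ ≤ C) {z : ℂ}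
    (hroot : p.eval z = 0) : ‖z‖ ≤ max 1 ((p.natDegree : ℝ) * C) := by
  rcases le_or_gt ‖z‖ 1 with h1 | h1
  · exact h1.trans (le_max_left _ _)
  set d := p.natDegree with hd
  have hd0 : d ≠ 0 := by
    intro h
    rw [hm.natDegree_eq_zero.mp h] at hroot
    simp at hroot
  have hz1 : (1:ℝ) ≤ ‖z‖ := le_of_lt h1
  have hz0 : (0:ℝ) < ‖z‖ := lt_trans zero_lt_one h1
  have hzd : z ^ d = -(∑ i ∈ range d, p.coeff i * z ^ i) := by
    have heval : (∑ i ∈ range d, p.coeff i * z ^ i) + z ^ d = 0 := by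
      rw [← hroot, eval_eq_sum_range, Finset.sum_range_succ, hm.coeff_natDegree, one_mul]
    linear_combination heval
  have hnorm : ‖z‖ ^ d ≤ (d:ℝ) * C * ‖z‖ ^ (d - 1) := by
    calc ‖z‖ ^ d = ‖z ^ d‖ := (norm_pow _ _).symm
      _ = ‖∑ i ∈ range d, p.coeff i * z ^ i‖ := by rw [hzd, norm_neg]
      _ ≤ ∑ i ∈ range d, ‖p.coeff i * z ^ i‖ := norm_sum_le _ _
      _ ≤ ∑ i ∈ range d, C * ‖z‖ ^ (d - 1) := by
          refine Finset.sum_le_sum fun i hi => ?_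
          rw [norm_mul, norm_pow]
          have hiC := hcoeff i (Finset.mem_range.mp hi)
          have hpow : ‖z‖ ^ i ≤ ‖z‖ ^ (d - 1) :=
            pow_le_pow_right₀ hz1 (Nat.le_sub_one_of_lt (Finset.mem_range.mp hi))
          exact mul_le_mul hiC hpow (by positivity) ((norm_nonneg _).trans hiC)
      _ = (d:ℝ) * C * ‖z‖ ^ (d - 1) := by
          rw [Finset.sum_const, Finset.card_range, nsmul_eq_mul]; ring
  have hfac : ‖z‖ ^ d = ‖z‖ ^ (d - 1) * ‖z‖ := by
    rw [← pow_succ, Nat.sub_add_cancel (Nat.one_le_iff_ne_zero.mpr hd0)]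
  rw [hfac] at hnorm
  have hp : (0:ℝ) < ‖z‖ ^ (d-1) := pow_pos hz0 _
  have : ‖z‖ ≤ (d:ℝ) * C := by nlinarith
  exact this.trans (le_max_right _ _)

lemma diffOn_entry {s : Set ℂ} {M : ℂ → Matrix (Fin n) (Fin n) ℂ}
    (h : DifferentiableOn ℂ M s) (i j : Fin n) :
    DifferentiableOn ℂ (fun ζ => M ζ i j) s :=
  (differentiableOn_pi.mp ((differentiableOn_pi.mp h) i)) j

lemma diffOn_det {s : Set ℂ} {M : ℂ → Matrix (Fin n) (Fin n) ℂ}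
    (h : ∀ i j, DifferentiableOn ℂ (fun ζ => M ζ i j) s) :
    DifferentiableOn ℂ (fun ζ => (M ζ).det) s := by
  have e : (fun ζ => (M ζ).det)
      = fun ζ => ∑ σ : Equiv.Perm (Fin n), ((Equiv.Perm.sign σ : ℤ) : ℂ) * ∏ i, M ζ (σ i) i := by
    funext ζ; rw [Matrix.det_apply]
    congr 1; funext σ; rw [Units.smul_def, zsmul_eq_mul]
  rw [e]
  apply DifferentiableOn.fun_sum
  intro σ _
  exact DifferentiableOn.const_mul
    (fun x hx => DifferentiableWithinAt.fun_finsetProd (fun i _ => h (σ i) i x hx)) _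

lemma diffOn_pow_entry {s : Set ℂ} {M : ℂ → Matrix (Fin n) (Fin n) ℂ}
    (h : DifferentiableOn ℂ M s) (m : ℕ) (i j : Fin n) :
    DifferentiableOn ℂ (fun ζ => (M ζ ^ m) i j) s := by
  induction m generalizing i j with
  | zero => simp only [pow_zero]; exact differentiableOn_const _
  | succ m ih =>
      have e : (fun ζ => (M ζ ^ (m+1)) i j)
          = fun ζ => ∑ k, (M ζ ^ m) i k * M ζ k j := by
        funext ζ; rw [pow_succ, Matrix.mul_apply]
      rw [e]
      exact DifferentiableOn.fun_sum fun k _ => (ih i k).mul (diffOn_entry h k j)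

end SchwarzSpec

/-- Schwarz lemma for the spectral unit ball: if `F : 𝔻 → Ω_n` is
holomorphic with `F(0) = 0`, then `F(ζ) = ζ·G(ζ)` for some holomorphic
`G : 𝔻 → M_n(ℂ)` with spectral radius `ρ(G(ζ)) ≤ 1`; in particular
`ρ(F(ζ)) ≤ |ζ|` on `𝔻`. -/
theorem schwarz_lemma_spectral_unit_ball
    {n : ℕ} (F : ℂ → Matrix (Fin n) (Fin n) ℂ)
    (hF : DifferentiableOn ℂ F (ball (0 : ℂ) 1))
    (hmaps : Set.MapsTo F (ball (0 : ℂ) 1)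
      {A : Matrix (Fin n) (Fin n) ℂ | spectrum ℂ A ⊆ ball (0 : ℂ) 1})
    (h0 : F 0 = 0) :
    (∃ G : ℂ → Matrix (Fin n) (Fin n) ℂ,
      DifferentiableOn ℂ G (ball (0 : ℂ) 1) ∧
      (∀ ζ ∈ ball (0 : ℂ) 1, spectralRadius ℂ (G ζ) ≤ 1) ∧
      ∀ ζ ∈ ball (0 : ℂ) 1, F ζ = ζ • G ζ) ∧
    ∀ ζ ∈ ball (0 : ℂ) 1, spectralRadius ℂ (F ζ) ≤ (‖ζ‖₊ : ENNReal) := by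
  classical
  rcases Nat.eq_zero_or_pos n with hn | hn
  · -- trivial case `n = 0`
    subst hn
    have hspec : ∀ A : Matrix (Fin 0) (Fin 0) ℂ, spectrum ℂ A = ∅ := by
      intro A
      ext μ
      simp only [Set.mem_empty_iff_false, iff_false]
      intro h
      exact (spectrum.mem_iff.mp h) (isUnit_of_subsingleton _)
    refine ⟨⟨fun _ => 0, differentiableOn_const _, ?_, ?_⟩, ?_⟩
    · intro ζ _; simp [spectralRadius, hspec]
    · intro ζ _; exact Subsingleton.elim _ _
    · intro ζ _; simp [spectralRadius, hspec]
  haveI : Nonempty (Fin n) := ⟨⟨0, hn⟩⟩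
  haveI : CompleteSpace (Matrix (Fin n) (Fin n) ℂ) :=
    inferInstanceAs (CompleteSpace (Fin n → Fin n → ℂ))
  set G : ℂ → Matrix (Fin n) (Fin n) ℂ := dslope F 0 with hGdef
  have hG : DifferentiableOn ℂ G (ball 0 1) :=
    (Complex.differentiableOn_dslope (ball_mem_nhds 0 one_pos)).mpr hF
  have hFG : ∀ ζ, F ζ = ζ • G ζ := by
    intro ζ
    have h := sub_smul_dslope F 0 ζ
    rw [sub_zero, h0, sub_zero] at h
    exact h.symm
  have hnatdeg : ∀ A : Matrix (Fin n) (Fin n) ℂ, (Matrix.charpoly A).natDegree = n := by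
    intro A; rw [Matrix.charpoly_natDegree_eq_dim, Fintype.card_fin]
  -- the key spectral estimate
  have key : ∀ ζ0 ∈ ball (0:ℂ) 1, ∀ μ ∈ spectrum ℂ (G ζ0), ‖μ‖ ≤ 1 := by
    intro ζ0 hζ0 μ hμ
    set Kk : ℕ → ℝ := fun k => (n+1:ℝ)^n * SchwarzSpec.Kc n k with hKk
    have hKknn : ∀ k, 0 ≤ Kk k := fun k =>
      mul_nonneg (by positivity) (SchwarzSpec.Kc_nonneg n k)
    set CC : ℝ := ∑ k ∈ Finset.range n, Kk k with hCC
    have hKkCC : ∀ k, k < n → Kk k ≤ CC := fun k hk =>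
      Finset.single_le_sum (f := Kk) (fun i _ => hKknn i) (Finset.mem_range.mpr hk)
    have hζ0n : ‖ζ0‖ < 1 := by rwa [mem_ball_zero_iff] at hζ0
    -- Step 1 : uniform bounds on the coefficients of the char. polynomials of powers of `G ζ0`
    have step1 : ∀ m : ℕ, 1 ≤ m → ∀ k : ℕ,
        ‖(Matrix.charpoly ((G ζ0)^m)).coeff k‖ ≤ Kk k := by
      intro m hm k
      have hψ : DifferentiableOn ℂ
          (fun ζ => (Matrix.charpoly ((G ζ)^m)).coeff k) (ball (0:ℂ) 1) := by
        have e : (fun ζ => (Matrix.charpoly ((G ζ)^m)).coeff k)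
            = fun ζ => ∑ j ∈ Finset.range (n+1),
                (Matrix.scalar (Fin n) (j:ℂ) - (G ζ)^m).det *
                (Lagrange.basis (Finset.range (n+1)) (fun j : ℕ => (j:ℂ)) j).coeff k := by
          funext ζ
          rw [SchwarzSpec.coeff_charpoly_eq_sum]
          exact Finset.sum_congr rfl fun j _ => by rw [SchwarzSpec.eval_charpoly']
        rw [e]
        apply DifferentiableOn.fun_sum
        intro j _
        apply DifferentiableOn.mul_const
        apply SchwarzSpec.diffOn_det
        intro i i'
        have e2 : (fun ζ => (Matrix.scalar (Fin n) (j:ℂ) - (G ζ)^m) i i')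
            = fun ζ => (Matrix.scalar (Fin n) (j:ℂ)) i i' - ((G ζ)^m) i i' := by
          funext ζ; rw [Matrix.sub_apply]
        rw [e2]
        exact (differentiableOn_const _).sub (SchwarzSpec.diffOn_pow_entry hG m i i')
      have per_s : ∀ s : ℝ, s ∈ Set.Ioo (max ‖ζ0‖ (1/2)) 1 →
          ‖(Matrix.charpoly ((G ζ0)^m)).coeff k‖ ≤ Kk k * (s ^ (m*n))⁻¹ := by
        intro s hs
        obtain ⟨hs1, hs2⟩ := hs
        have hsz : ‖ζ0‖ < s := lt_of_le_of_lt (le_max_left _ _) hs1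
        have hs0 : (0:ℝ) < s := lt_trans one_half_pos (lt_of_le_of_lt (le_max_right _ _) hs1)
        have hsinv : (1:ℝ) ≤ s⁻¹ := by
          rw [le_inv_comm₀ one_pos hs0]
          simpa using hs2.le
        have hB1 : (1:ℝ) ≤ (s⁻¹)^m := one_le_pow₀ hsinv
        have frontier_bound : ∀ ζ ∈ sphere (0:ℂ) s,
            ‖(Matrix.charpoly ((G ζ)^m)).coeff k‖ ≤ Kk k * (s ^ (m*n))⁻¹ := by
          intro ζ hζs
          have hζnorm : ‖ζ‖ = s := by rwa [mem_sphere_zero_iff_norm] at hζs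
          have hζne : ζ ≠ 0 := by
            intro h; rw [h, norm_zero] at hζnorm; exact absurd hζnorm.symm (ne_of_gt hs0)
          have hζball : ζ ∈ ball (0:ℂ) 1 := by rw [mem_ball_zero_iff, hζnorm]; exact hs2
          have hGspec : ∀ ν ∈ spectrum ℂ (G ζ), ‖ν‖ ≤ s⁻¹ := by
            intro ν hν
            have h1 : (Units.mk0 ζ hζne) • ν ∈ spectrum ℂ ((Units.mk0 ζ hζne) • G ζ) :=
              spectrum.smul_mem_smul_iff.mpr hν
            have h2 : (Units.mk0 ζ hζne) • G ζ = F ζ := by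
              rw [Units.smul_def, Units.val_mk0, ← hFG]
            rw [h2] at h1
            have h3 : ζ * ν ∈ spectrum ℂ (F ζ) := by
              simpa [Units.smul_def, smul_eq_mul] using h1
            have h4 : ‖ζ * ν‖ < 1 := by
              have := hmaps hζball h3
              rwa [mem_ball_zero_iff] at this
            rw [norm_mul, hζnorm] at h4
            have hinv : s * s⁻¹ = 1 := mul_inv_cancel₀ (ne_of_gt hs0)
            nlinarith [h4, hs0, hinv, norm_nonneg ν]
          have hspecpow : ∀ μ' ∈ spectrum ℂ ((G ζ)^m), ‖μ'‖ ≤ (s⁻¹)^m := by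
            intro μ' hμ'
            rw [spectrum.map_pow_of_nonempty
              (spectrum.nonempty_of_isAlgClosed_of_finiteDimensional ℂ (G ζ)) m] at hμ'
            obtain ⟨ν, hν, rfl⟩ := hμ'
            rw [norm_pow]
            exact pow_le_pow_left₀ (norm_nonneg _) (hGspec ν hν) m
          have hb := SchwarzSpec.norm_coeff_charpoly_le ((G ζ)^m) hB1 hspecpow k
          calc ‖(Matrix.charpoly ((G ζ)^m)).coeff k‖
              ≤ ((n+1:ℝ)^n * SchwarzSpec.Kc n k) * ((s⁻¹)^m) ^ n := hb
            _ = Kk k * (s ^ (m*n))⁻¹ := by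
                rw [hKk, ← pow_mul, inv_pow]
        have hcl : closure (ball (0:ℂ) s) = closedBall 0 s := closure_ball 0 (ne_of_gt hs0)
        have hfr : frontier (ball (0:ℂ) s) = sphere 0 s := frontier_ball 0 (ne_of_gt hs0)
        have hdcl : DiffContOnCl ℂ (fun ζ => (Matrix.charpoly ((G ζ)^m)).coeff k)
            (ball (0:ℂ) s) := by
          refine DifferentiableOn.diffContOnCl ?_
          rw [hcl]
          exact hψ.mono (closedBall_subset_ball hs2)
        have hz0mem : ζ0 ∈ closure (ball (0:ℂ) s) := by
          rw [hcl]
          exact mem_closedBall_zero_iff.mpr hsz.le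
        exact Complex.norm_le_of_forall_mem_frontier_norm_le
          (f := fun ζ => (Matrix.charpoly ((G ζ)^m)).coeff k) (U := ball (0:ℂ) s)
          isBounded_ball hdcl (fun z hz => frontier_bound z (by rwa [hfr] at hz)) hz0mem
      -- let `s → 1`
      have htend : Filter.Tendsto (fun s : ℝ => Kk k * (s ^ (m*n))⁻¹)
          (nhdsWithin 1 (Set.Iio 1)) (nhds (Kk k)) := by
        have hcont : ContinuousAt (fun s : ℝ => Kk k * (s ^ (m*n))⁻¹) 1 := by
          apply ContinuousAt.mul continuousAt_const
          exact ((continuousAt_id.pow _).inv₀ (by norm_num))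
        have h := hcont.tendsto.mono_left (nhdsWithin_le_nhds (s := Set.Iio (1:ℝ)))
        simpa using h
      refine ge_of_tendsto htend ?_
      have hmem : Set.Ioo (max ‖ζ0‖ (1/2)) 1 ∈ nhdsWithin (1:ℝ) (Set.Iio 1) :=
        Ioo_mem_nhdsLT_of_mem ⟨max_lt hζ0n (by norm_num), le_refl 1⟩
      filter_upwards [hmem] with s hs
      exact per_s s hs
    -- Step 2 : bound the powers of `μ`
    have step2 : ∀ m : ℕ, 1 ≤ m → ‖μ‖ ^ m ≤ max 1 ((n:ℝ) * CC) := by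
      intro m hm
      have hpowmem : μ^m ∈ spectrum ℂ ((G ζ0)^m) :=
        spectrum.pow_image_subset (G ζ0) m ⟨μ, hμ, rfl⟩
      have hroot := (SchwarzSpec.mem_spectrum_iff_root _ _).mp hpowmem
      have hcb := SchwarzSpec.root_norm_le (Matrix.charpoly_monic ((G ζ0)^m))
        (C := CC) (fun k hk => (step1 m hm k).trans
          (hKkCC k (by rwa [hnatdeg] at hk))) hroot
      rw [hnatdeg] at hcb
      rw [← norm_pow]
      exact hcb
    -- Step 3 : conclude
    by_contra hgt
    push_neg at hgt
    obtain ⟨m, hm1, hmR⟩ : ∃ m : ℕ, 1 ≤ m ∧ max 1 ((n:ℝ)*CC) < ‖μ‖^m := by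
      have h := tendsto_pow_atTop_atTop_of_one_lt hgt
      obtain ⟨m, hm⟩ :=
        ((h.eventually_gt_atTop (max 1 ((n:ℝ)*CC))).and (Filter.eventually_ge_atTop 1)).exists
      exact ⟨m, hm.2, hm.1⟩
    exact absurd (step2 m hm1) (not_le.mpr hmR)
  -- assemble everything
  refine ⟨⟨G, hG, ?_, fun ζ _ => hFG ζ⟩, ?_⟩
  · intro ζ hζ
    refine iSup₂_le fun μ hμ => ?_
    have h1 : ‖μ‖₊ ≤ (1:NNReal) := by
      rw [← NNReal.coe_le_coe, coe_nnnorm, NNReal.coe_one]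
      exact key ζ hζ μ hμ
    exact_mod_cast h1
  · intro ζ hζ
    refine iSup₂_le fun ν hν => ?_
    rcases eq_or_ne ζ 0 with rfl | hζne
    · rw [h0] at hν
      have hν0 : ν = 0 := by
        by_contra h
        apply spectrum.mem_iff.mp hν
        rw [sub_zero]
        exact (isUnit_iff_ne_zero.mpr h).map (algebraMap ℂ (Matrix (Fin n) (Fin n) ℂ))
      simp [hν0]
    · have hσ := spectrum.unit_smul_eq_smul (G ζ) (Units.mk0 ζ hζne)
      have h2 : (Units.mk0 ζ hζne) • G ζ = F ζ := by
        rw [Units.smul_def, Units.val_mk0, ← hFG]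
      rw [h2] at hσ
      rw [hσ] at hν
      obtain ⟨μ, hμ, rfl⟩ := Set.mem_smul_set.mp hν
      have hμ1 := key ζ hζ μ hμ
      have hle : ‖(Units.mk0 ζ hζne) • μ‖ ≤ ‖ζ‖ := by
        rw [Units.smul_def, Units.val_mk0, smul_eq_mul, norm_mul]
        nlinarith [norm_nonneg ζ, norm_nonneg μ]
      have h1 : ‖(Units.mk0 ζ hζne) • μ‖₊ ≤ ‖ζ‖₊ := by
        rw [← NNReal.coe_le_coe, coe_nnnorm, coe_nnnorm]
        exact hle
      exact_mod_cast h1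
end

section
/- Let Φ : 𝔻 → M_n(ℂ) be holomorphic with ρ(Φ(ζ)) ≤ 1 for all ζ ∈ 𝔻. If there exist θ_0 ∈ ℝ and ζ_0 ∈ 𝔻 with e^{iθ_0} ∈ σ(Φ(ζ_0)), then e^{iθ_0} ∈ σ(Φ(ζ)) for every ζ ∈ 𝔻. -/
open Metric

attribute [local instance] Matrix.normedAddCommGroup Matrix.normedSpace

private lemma det_diffOn {n : ℕ} {s : Set ℂ} {A : ℂ → Matrix (Fin n) (Fin n) ℂ}
    (hA : ∀ i j, DifferentiableOn ℂ (fun ζ => A ζ i j) s) :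
    DifferentiableOn ℂ (fun ζ => (A ζ).det) s := by
  simp only [Matrix.det_apply]
  apply DifferentiableOn.fun_sum
  intro σ _
  have h : DifferentiableOn ℂ (fun ζ => ∏ i, A ζ (σ i) i) s :=
    DifferentiableOn.fun_finset_prod (fun i _ => hA (σ i) i)
  simpa [Units.smul_def, zsmul_eq_mul] using h.const_mul ((Equiv.Perm.sign σ : ℤ) : ℂ)

private lemma det_contOn {n : ℕ} {X : Type*} [TopologicalSpace X] {s : Set X}
    {A : X → Matrix (Fin n) (Fin n) ℂ}
    (hA : ∀ i j, ContinuousOn (fun x => A x i j) s) :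
    ContinuousOn (fun x => (A x).det) s := by
  simp only [Matrix.det_apply]
  apply continuousOn_finset_sum
  intro σ _
  have h : ContinuousOn (fun x => ∏ i, A x (σ i) i) s :=
    continuousOn_finset_prod _ (fun i _ => hA (σ i) i)
  simpa [Units.smul_def, zsmul_eq_mul, Pi.smul_def] using h.const_smul ((Equiv.Perm.sign σ : ℤ) : ℂ)

private lemma det_ne_zero_of_gt {n : ℕ} (A : Matrix (Fin n) (Fin n) ℂ)
    (hρ : spectralRadius ℂ A ≤ 1) (w : ℂ) (hw : 1 < ‖w‖) :
    (w • (1 : Matrix (Fin n) (Fin n) ℂ) - A).det ≠ 0 := by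
  have hmem : w ∉ spectrum ℂ A := by
    intro hmem
    have h1 : (‖w‖₊ : ENNReal) ≤ spectralRadius ℂ A :=
      le_iSup₂ (f := fun k (_ : k ∈ spectrum ℂ A) => (‖k‖₊ : ENNReal)) w hmem
    have h2 : (1 : ENNReal) < ‖w‖₊ := by
      rw [← ENNReal.coe_one]
      exact_mod_cast (by rw [← NNReal.coe_lt_coe, coe_nnnorm, NNReal.coe_one]; exact hw : (1 : NNReal) < ‖w‖₊)
    exact absurd (h2.trans_le (h1.trans hρ)) (lt_irrefl _)
  rw [spectrum.notMem_iff] at hmem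
  have : IsUnit (w • (1 : Matrix (Fin n) (Fin n) ℂ) - A) := by
    convert hmem using 2
    simp [Algebra.algebraMap_eq_smul_one]
  exact ((Matrix.isUnit_iff_isUnit_det _).mp this).ne_zero

private lemma mem_spectrum_of_det_eq_zero {n : ℕ} (A : Matrix (Fin n) (Fin n) ℂ) (w : ℂ)
    (h : (w • (1 : Matrix (Fin n) (Fin n) ℂ) - A).det = 0) : w ∈ spectrum ℂ A := by
  rw [spectrum.mem_iff]
  intro hu
  have : IsUnit (w • (1 : Matrix (Fin n) (Fin n) ℂ) - A) := by
    convert hu using 2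
    simp [Algebra.algebraMap_eq_smul_one]
  exact ((Matrix.isUnit_iff_isUnit_det _).mp this).ne_zero h

/-- if `Φ : 𝔻 → M_n(ℂ)` is holomorphic with `ρ(Φ(ζ)) ≤ 1` on `𝔻`
and some unimodular number `e^{iθ₀}` is an eigenvalue of `Φ(ζ₀)` for some
`ζ₀ ∈ 𝔻`, then `e^{iθ₀}` is an eigenvalue of `Φ(ζ)` for every `ζ ∈ 𝔻`. -/
theorem unimodular_eigenvalue_rigidity
    {n : ℕ} (Φ : ℂ → Matrix (Fin n) (Fin n) ℂ)
    (hΦ : DifferentiableOn ℂ Φ (ball (0 : ℂ) 1))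
    (hρ : ∀ ζ ∈ ball (0 : ℂ) 1, spectralRadius ℂ (Φ ζ) ≤ 1)
    (θ₀ : ℝ) (ζ₀ : ℂ) (hζ₀ : ζ₀ ∈ ball (0 : ℂ) 1)
    (hev : Complex.exp (θ₀ * Complex.I) ∈ spectrum ℂ (Φ ζ₀)) :
    ∀ ζ ∈ ball (0 : ℂ) 1, Complex.exp (θ₀ * Complex.I) ∈ spectrum ℂ (Φ ζ) := by
  by_contra hcon
  push_neg at hcon
  obtain ⟨ζ₁, hζ₁, hζ₁spec⟩ := hcon
  set u : ℂ := Complex.exp (θ₀ * Complex.I) with hu_def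
  have hu : ‖u‖ = 1 := by
    rw [hu_def, Complex.norm_exp_ofReal_mul_I]
  -- entry differentiability and continuity
  have hentry : ∀ i j, DifferentiableOn ℂ (fun ζ => Φ ζ i j) (ball (0 : ℂ) 1) := fun i j =>
    (differentiableOn_pi.mp ((differentiableOn_pi.mp hΦ) i)) j
  have hentryC : ∀ i j, ContinuousOn (fun ζ => Φ ζ i j) (ball (0 : ℂ) 1) := fun i j =>
    (hentry i j).continuousOn
  -- the function g
  set g : ℂ → ℂ := fun ζ => (u • (1 : Matrix (Fin n) (Fin n) ℂ) - Φ ζ).det with hg_def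
  have hgdiff : DifferentiableOn ℂ g (ball (0 : ℂ) 1) := by
    apply det_diffOn
    intro i j
    exact (differentiableOn_const _).sub (hentry i j)
  have hg0 : g ζ₀ = 0 := by
    by_contra h0
    have hIU : IsUnit ((u • (1 : Matrix (Fin n) (Fin n) ℂ) - Φ ζ₀)) :=
      (Matrix.isUnit_iff_isUnit_det _).mpr (isUnit_iff_ne_zero.mpr h0)
    rw [spectrum.mem_iff] at hev
    apply hev
    convert hIU using 2
    simp [Algebra.algebraMap_eq_smul_one]
  have hg1 : g ζ₁ ≠ 0 := fun h0 => hζ₁spec (mem_spectrum_of_det_eq_zero _ _ h0)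
  -- zeros of g are isolated near ζ₀
  have hganal : AnalyticOnNhd ℂ g (ball (0 : ℂ) 1) := hgdiff.analyticOnNhd isOpen_ball
  have hfreq : ¬ (∃ᶠ z in nhdsWithin ζ₀ {ζ₀}ᶜ, g z = 0) := by
    intro hfr
    exact hg1 (hganal.eqOn_zero_of_preconnected_of_frequently_eq_zero
      (convex_ball (0:ℂ) 1).isPreconnected hζ₀ hfr hζ₁)
  rw [Filter.not_frequently] at hfreq
  rw [Filter.eventually_iff, mem_nhdsWithin] at hfreq
  obtain ⟨V, hVopen, hVmem, hVsub⟩ := hfreq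
  obtain ⟨ε₁, hε₁, hball1⟩ := Metric.isOpen_iff.mp hVopen ζ₀ hVmem
  obtain ⟨ε₂, hε₂, hball2⟩ := Metric.isOpen_iff.mp isOpen_ball ζ₀ hζ₀
  set s : ℝ := min ε₁ ε₂ / 2 with hs_def
  have hmin : 0 < min ε₁ ε₂ := lt_min hε₁ hε₂
  have hs : 0 < s := by positivity
  have hslt : s < min ε₁ ε₂ := half_lt_self hmin
  have hslt₁ : s < ε₁ := hslt.trans_le (min_le_left _ _)
  have hslt₂ : s < ε₂ := hslt.trans_le (min_le_right _ _)
  have hcb_ball : closedBall ζ₀ s ⊆ ball (0:ℂ) 1 := (closedBall_subset_ball hslt₂).trans hball2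
  have hsph_ball : sphere ζ₀ s ⊆ ball (0:ℂ) 1 := sphere_subset_closedBall.trans hcb_ball
  have hsph_ne : ∀ z ∈ sphere ζ₀ s, g z ≠ 0 := by
    intro z hz
    apply hVsub
    constructor
    · apply hball1
      rw [mem_ball, mem_sphere.mp hz]
      exact hslt₁
    · simp only [Set.mem_compl_iff, Set.mem_singleton_iff]
      intro h
      rw [h, mem_sphere, dist_self] at hz
      exact hs.ne hz
  -- minimum of ‖g‖ on the sphere
  have hsphne : (sphere ζ₀ s).Nonempty := NormedSpace.sphere_nonempty.mpr hs.le
  obtain ⟨zm, hzm, hzmin⟩ := (isCompact_sphere ζ₀ s).exists_isMinOn hsphne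
    (continuous_norm.comp_continuousOn (hgdiff.continuousOn.mono hsph_ball))
  set δ : ℝ := ‖g zm‖ with hδ_def
  have hδ : 0 < δ := norm_pos_iff.mpr (hsph_ne zm hzm)
  have hδle : ∀ z ∈ sphere ζ₀ s, δ ≤ ‖g z‖ := fun z hz => hzmin hz
  -- uniform continuity on a compact set
  set K : Set (ℝ × ℂ) := (Set.Icc (1:ℝ) 2) ×ˢ (insert ζ₀ (sphere ζ₀ s)) with hK_def
  have hKsub : insert ζ₀ (sphere ζ₀ s) ⊆ ball (0:ℂ) 1 := by
    intro z hz
    rcases Set.mem_insert_iff.mp hz with h | h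
    · rw [h]; exact hζ₀
    · exact hsph_ball h
  have hKcomp : IsCompact K := (isCompact_Icc).prod ((isCompact_sphere ζ₀ s).insert ζ₀)
  set H : ℝ × ℂ → ℂ :=
    fun p => (((p.1 : ℂ) * u) • (1 : Matrix (Fin n) (Fin n) ℂ) - Φ p.2).det with hH_def
  have hHcont : ContinuousOn H K := by
    apply det_contOn
    intro i j
    apply ContinuousOn.sub
    · apply Continuous.continuousOn
      exact ((Complex.continuous_ofReal.comp continuous_fst).mul continuous_const).smul
        continuous_const
    · exact (hentryC i j).comp continuousOn_snd (fun p hp => hKsub (Set.mem_prod.mp hp).2)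
  have hHuc : UniformContinuousOn H K := hKcomp.uniformContinuousOn_of_continuous hHcont
  rw [Metric.uniformContinuousOn_iff] at hHuc
  obtain ⟨η, hη, hHη⟩ := hHuc (δ/3) (by positivity)
  set r : ℝ := 1 + min η 1 / 2 with hr_def
  have hmη : 0 < min η 1 := lt_min hη one_pos
  have hr1 : 1 < r := by simp only [hr_def]; linarith
  have hr2 : r ≤ 2 := by
    have : min η 1 ≤ 1 := min_le_right _ _
    simp only [hr_def]; linarith
  have hrdist : ∀ ζ : ℂ, dist ((r, ζ) : ℝ × ℂ) ((1 : ℝ), ζ) < η := by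
    intro ζ
    rw [Prod.dist_eq]
    simp only [dist_self]
    have h1 : dist r 1 = min η 1 / 2 := by
      rw [Real.dist_eq, hr_def]
      rw [add_sub_cancel_left, abs_of_pos (by linarith)]
    rw [h1]
    have hm : min η 1 ≤ η := min_le_left _ _
    have h2 : min η 1 / 2 < η := by linarith
    exact max_lt h2 hη
  have hH1 : ∀ ζ : ℂ, H ((1:ℝ), ζ) = g ζ := by
    intro ζ
    simp only [hH_def, hg_def, Complex.ofReal_one, one_mul]
  have hHr : ∀ ζ ∈ insert ζ₀ (sphere ζ₀ s), dist (H (r, ζ)) (g ζ) < δ/3 := by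
    intro ζ hζ
    rw [← hH1 ζ]
    exact hHη (r, ζ) ⟨⟨hr1.le, hr2⟩, hζ⟩ ((1:ℝ), ζ) ⟨⟨le_refl 1, one_le_two⟩, hζ⟩ (hrdist ζ)
  -- the scaled point w
  set w : ℂ := (r : ℂ) * u with hw_def
  have hwnorm : 1 < ‖w‖ := by
    rw [hw_def, norm_mul, hu, mul_one, Complex.norm_real, Real.norm_eq_abs,
      abs_of_pos (by linarith : (0:ℝ) < r)]
    exact hr1
  -- the reciprocal function
  set Fr : ℂ → ℂ :=
    fun ζ => ((w • (1 : Matrix (Fin n) (Fin n) ℂ) - Φ ζ).det)⁻¹ with hFr_def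
  have hfr_ne : ∀ ζ ∈ ball (0:ℂ) 1, (w • (1 : Matrix (Fin n) (Fin n) ℂ) - Φ ζ).det ≠ 0 :=
    fun ζ hζ => det_ne_zero_of_gt (Φ ζ) (hρ ζ hζ) w hwnorm
  have hfrdiff : DifferentiableOn ℂ (fun ζ => (w • (1 : Matrix (Fin n) (Fin n) ℂ) - Φ ζ).det)
      (ball (0:ℂ) 1) := by
    apply det_diffOn
    intro i j
    exact (differentiableOn_const _).sub (hentry i j)
  have hFrdiff : DifferentiableOn ℂ Fr (ball (0:ℂ) 1) := hfrdiff.inv hfr_ne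
  -- Cauchy integral formula
  have hcauchy := (hFrdiff.mono hcb_ball).circleIntegral_sub_inv_smul (mem_ball_self hs)
  -- relate H (r, ζ) to the determinant
  have hHrw : ∀ ζ : ℂ, H (r, ζ) = (w • (1 : Matrix (Fin n) (Fin n) ℂ) - Φ ζ).det := by
    intro ζ; rfl
  -- bound on the sphere
  have hsphbound : ∀ z ∈ sphere ζ₀ s, ‖(z - ζ₀)⁻¹ • Fr z‖ ≤ s⁻¹ * (2*δ/3)⁻¹ := by
    intro z hz
    have hdetlb : 2*δ/3 ≤ ‖H (r, z)‖ := by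
      have h1 : dist (H (r, z)) (g z) < δ/3 := hHr z (Set.mem_insert_of_mem _ hz)
      have h2 : δ ≤ ‖g z‖ := hδle z hz
      have h3 : ‖g z‖ ≤ ‖H (r, z)‖ + dist (H (r, z)) (g z) := by
        rw [dist_eq_norm]
        calc ‖g z‖ = ‖H (r, z) - (H (r, z) - g z)‖ := by ring_nf
          _ ≤ ‖H (r, z)‖ + ‖H (r, z) - g z‖ := norm_sub_le _ _
      linarith
    have hFrb : ‖Fr z‖ ≤ (2*δ/3)⁻¹ := by
      rw [hFr_def]
      simp only
      rw [norm_inv, ← hHrw z]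
      exact inv_anti₀ (by linarith) hdetlb
    rw [norm_smul, norm_inv, ← dist_eq_norm, mem_sphere.mp hz]
    exact mul_le_mul (le_refl _) hFrb (norm_nonneg _) (by positivity)
  have hintbound := circleIntegral.norm_integral_le_of_norm_le_const hs.le hsphbound
  rw [hcauchy] at hintbound
  -- lower bound at ζ₀
  have hdet0 : ‖H (r, ζ₀)‖ < δ/3 := by
    have := hHr ζ₀ (Set.mem_insert _ _)
    rwa [hg0, dist_zero_right] at this
  have hdet0pos : 0 < ‖H (r, ζ₀)‖ := by
    rw [hHrw ζ₀]
    exact norm_pos_iff.mpr (hfr_ne ζ₀ hζ₀)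
  have hFr0 : (δ/3)⁻¹ < ‖Fr ζ₀‖ := by
    rw [hFr_def]
    simp only
    rw [norm_inv, ← hHrw ζ₀]
    exact inv_strictAnti₀ hdet0pos hdet0
  have hlhs : ‖(2 * Real.pi * Complex.I) • Fr ζ₀‖ = 2 * Real.pi * ‖Fr ζ₀‖ := by
    rw [norm_smul]
    simp [abs_of_pos Real.pi_pos, mul_assoc]
  rw [hlhs] at hintbound
  have hπ : 0 < Real.pi := Real.pi_pos
  have hchain : 2 * Real.pi * (δ/3)⁻¹ < 2 * Real.pi * s * (s⁻¹ * (2*δ/3)⁻¹) := by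
    calc 2 * Real.pi * (δ/3)⁻¹ < 2 * Real.pi * ‖Fr ζ₀‖ := by
          apply mul_lt_mul_of_pos_left hFr0 (by positivity)
      _ ≤ 2 * Real.pi * s * (s⁻¹ * (2*δ/3)⁻¹) := hintbound
  rw [show 2 * Real.pi * s * (s⁻¹ * (2*δ/3)⁻¹) = 2 * Real.pi * (s * s⁻¹) * (2*δ/3)⁻¹ by ring,
    mul_inv_cancel₀ hs.ne', mul_one] at hchain
  have : (δ/3)⁻¹ < (2*δ/3)⁻¹ := by
    have h2π : 0 < 2 * Real.pi := by positivity
    exact lt_of_mul_lt_mul_left hchain h2π.le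
  have h1 : (2*δ/3)⁻¹ < (δ/3)⁻¹ := by
    apply inv_strictAnti₀ (by positivity)
    linarith
  linarith
end

section
/- Let N be a nilpotent operator of degree n on an n-dimensional complex vector space (N^{n-1} ≠ 0 = N^n), and let A = Σ_{j=0}^{n-1} α_j N^j with α_j ∈ ℂ. Then the minimal polynomial of A is (t - α_0)^{⌊(n-1)/ℓ⌋ + 1}, where ℓ := n if α_j = 0 for all 1 ≤ j ≤ n-1, and otherwise ℓ := min{ j ∈ {1,...,n-1} : α_j ≠ 0 }. -/
open Polynomial

/-- If `(A - a)^m = 0` but `(A - a)^(m-1) ≠ 0` with `1 ≤ m`, then the minimal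
polynomial of `A` is `(X - C a)^m`. -/
lemma minpoly_eq_pow_of_pow_eq_zero
    {V : Type*} [AddCommGroup V] [Module ℂ V] [FiniteDimensional ℂ V]
    (A : Module.End ℂ V) (a : ℂ) (m : ℕ) (hm : 1 ≤ m)
    (h0 : (A - algebraMap ℂ (Module.End ℂ V) a) ^ m = 0)
    (h1 : (A - algebraMap ℂ (Module.End ℂ V) a) ^ (m - 1) ≠ 0) :
    minpoly ℂ A = (X - C a) ^ m := by
  have hint : IsIntegral ℂ A := Algebra.IsIntegral.isIntegral A
  have haev : ∀ k : ℕ, aeval A ((X - C a) ^ k)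
      = (A - algebraMap ℂ (Module.End ℂ V) a) ^ k := by
    intro k; simp
  have hdvd : minpoly ℂ A ∣ (X - C a) ^ m := minpoly.dvd ℂ A (by rw [haev]; exact h0)
  obtain ⟨j, hj, hassoc⟩ := (dvd_prime_pow (prime_X_sub_C a) m).mp hdvd
  have heq : minpoly ℂ A = (X - C a) ^ j :=
    Polynomial.eq_of_monic_of_associated (minpoly.monic hint) ((monic_X_sub_C a).pow j) hassoc
  have hjm : j = m := by
    by_contra hne
    have hz : (A - algebraMap ℂ (Module.End ℂ V) a) ^ j = 0 := by
      rw [← haev, ← heq]; exact minpoly.aeval ℂ A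
    have : (A - algebraMap ℂ (Module.End ℂ V) a) ^ (m - 1) = 0 := by
      calc (A - algebraMap ℂ (Module.End ℂ V) a) ^ (m - 1)
          = (A - algebraMap ℂ (Module.End ℂ V) a) ^ j *
            (A - algebraMap ℂ (Module.End ℂ V) a) ^ (m - 1 - j) := by
            rw [← pow_add]; congr 1; omega
        _ = 0 := by rw [hz, zero_mul]
    exact h1 this
  rw [heq, hjm]

/-- if `N` is nilpotent of degree `n` on an `n`-dimensional complex
space and `A = ∑_{j=0}^{n-1} α_j N^j`, then the minimal polynomial of `A` is
`(t - α₀)^{⌊(n-1)/ℓ⌋ + 1}` where `ℓ = n` if all `α_j = 0` for `1 ≤ j ≤ n-1` and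
`ℓ = min{ j ∈ {1,…,n-1} : α_j ≠ 0 }` otherwise.  (The number `ℓ` is encoded as
`sInf ({j | 1 ≤ j ∧ j ≤ n-1 ∧ α j ≠ 0} ∪ {n})`, which agrees with this case
distinction.) -/
theorem minpoly_lincomb_nilpotent
    {V : Type*} [AddCommGroup V] [Module ℂ V] [FiniteDimensional ℂ V]
    {n : ℕ} (hdim : Module.finrank ℂ V = n)
    (N : Module.End ℂ V) (hN1 : N ^ (n - 1) ≠ 0) (hN : N ^ n = 0)
    (α : ℕ → ℂ) (A : Module.End ℂ V)
    (hA : A = ∑ j ∈ Finset.range n, α j • N ^ j) :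
    minpoly ℂ A =
      (X - C (α 0)) ^
        ((n - 1) / sInf ({j : ℕ | 1 ≤ j ∧ j ≤ n - 1 ∧ α j ≠ 0} ∪ {n}) + 1) := by
  have hn1 : 1 ≤ n := by
    by_contra h
    have hn0 : n = 0 := by omega
    subst hn0
    simp only [pow_zero] at hN
    exact hN1 (by simpa using hN)
  have hNtriv : Nontrivial (Module.End ℂ V) := ⟨⟨N ^ (n - 1), 0, hN1⟩⟩
  set S : Set ℕ := {j : ℕ | 1 ≤ j ∧ j ≤ n - 1 ∧ α j ≠ 0} ∪ {n} with hS
  set ℓ : ℕ := sInf S with hℓ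
  have hmem : ℓ ∈ S := Nat.sInf_mem ⟨n, Or.inr rfl⟩
  have hle : ℓ ≤ n := Nat.sInf_le (Or.inr rfl)
  have hpos : 1 ≤ ℓ := by
    rcases hmem with h | h
    · exact h.1
    · rw [Set.mem_singleton_iff] at h
      omega
  have hαzero : ∀ j, 1 ≤ j → j < ℓ → α j = 0 := by
    intro j h1j hjl
    by_contra hne
    have : ℓ ≤ j := Nat.sInf_le (Or.inl ⟨h1j, by omega, hne⟩)
    omega
  set B : Module.End ℂ V := A - algebraMap ℂ (Module.End ℂ V) (α 0) with hB
  have hBsum : B = ∑ j ∈ Finset.Ico 1 n, α j • N ^ j := by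
    rw [hB, hA, Finset.range_eq_Ico, Finset.sum_eq_sum_Ico_succ_bot hn1]
    simp [Algebra.algebraMap_eq_smul_one]
  -- the exponent
  have hNk : ∀ k, n ≤ k → N ^ k = 0 := by
    intro k hk
    calc N ^ k = N ^ n * N ^ (k - n) := by rw [← pow_add]; congr 1; omega
      _ = 0 := by rw [hN, zero_mul]
  have hNk' : ∀ k, k ≤ n - 1 → N ^ k ≠ 0 := by
    intro k hk h0
    apply hN1
    calc N ^ (n - 1) = N ^ k * N ^ (n - 1 - k) := by rw [← pow_add]; congr 1; omega
      _ = 0 := by rw [h0, zero_mul]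
  rcases eq_or_lt_of_le hle with heq | hlt
  · -- ℓ = n : all coefficients vanish, B = 0, exponent is 1
    have hB0 : B = 0 := by
      rw [hBsum]
      apply Finset.sum_eq_zero
      intro j hj
      rw [Finset.mem_Ico] at hj
      rw [hαzero j hj.1 (by omega), zero_smul]
    have hdiv : (n - 1) / ℓ = 0 := Nat.div_eq_of_lt (by omega)
    rw [hdiv]
    apply minpoly_eq_pow_of_pow_eq_zero A (α 0) 1 le_rfl
    · rw [← hB, hB0, pow_one]
    · rw [← hB]; simp only [Nat.sub_self, pow_zero]; exact one_ne_zero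
  · -- ℓ < n
    have hℓn1 : ℓ ≤ n - 1 := by omega
    have hαℓ : α ℓ ≠ 0 := by
      rcases hmem with h | h
      · exact h.2.2
      · rw [Set.mem_singleton_iff] at h
        omega
    -- rewrite B as N^ℓ * U
    set U : Module.End ℂ V := ∑ i ∈ Finset.range (n - ℓ), α (ℓ + i) • N ^ i with hU
    have hBU : B = N ^ ℓ * U := by
      rw [hBsum, hU, Finset.mul_sum]
      rw [← Finset.sum_Ico_consecutive (fun j => α j • N ^ j) hpos hle]
      have hz : ∑ j ∈ Finset.Ico 1 ℓ, α j • N ^ j = 0 :=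
        Finset.sum_eq_zero (fun j hj => by
          rw [Finset.mem_Ico] at hj
          rw [hαzero j hj.1 hj.2, zero_smul])
      rw [hz, zero_add, Finset.sum_Ico_eq_sum_range]
      apply Finset.sum_congr rfl
      intro i _
      rw [mul_smul_comm, ← pow_add]
    have hcommU : Commute (N ^ ℓ) U := by
      apply Commute.sum_right
      intro i _
      exact ((Commute.refl N).pow_pow ℓ i).smul_right _
    -- U is a unit
    have hUnit : IsUnit U := by
      have hnl1 : 1 ≤ n - ℓ := by omega
      have hUsplit : U = algebraMap ℂ (Module.End ℂ V) (α ℓ) +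
          ∑ i ∈ Finset.Ico 1 (n - ℓ), α (ℓ + i) • N ^ i := by
        rw [hU, Finset.range_eq_Ico, Finset.sum_eq_sum_Ico_succ_bot hnl1]
        simp [Algebra.algebraMap_eq_smul_one]
      rw [hUsplit]
      have hnil : IsNilpotent (∑ i ∈ Finset.Ico 1 (n - ℓ), α (ℓ + i) • N ^ i) := by
        apply Commute.isNilpotent_sum
        · intro i hi
          rw [Finset.mem_Ico] at hi
          apply IsNilpotent.smul
          exact ⟨n, by rw [← pow_mul]; exact hNk _ (Nat.le_mul_of_pos_left n (by omega))⟩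
        · intro i j _ _
          exact (((Commute.refl N).pow_pow i j).smul_right _).smul_left _
      refine hnil.isUnit_add_left_of_commute (IsUnit.map _ (isUnit_iff_ne_zero.mpr hαℓ)) ?_
      exact Algebra.commute_algebraMap_right _ _
    apply minpoly_eq_pow_of_pow_eq_zero A (α 0) ((n - 1) / ℓ + 1) (Nat.le_add_left 1 _)
    · -- B ^ ((n-1)/ℓ + 1) = 0
      have hq : n ≤ ℓ * ((n - 1) / ℓ + 1) := by
        have h1 := Nat.div_add_mod (n - 1) ℓ
        have h2 := Nat.mod_lt (n - 1) (show 0 < ℓ by omega)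
        have h3 : ℓ * ((n - 1) / ℓ + 1) = ℓ * ((n - 1) / ℓ) + ℓ := Nat.mul_succ ℓ _
        omega
      rw [← hB, hBU, hcommU.mul_pow, ← pow_mul, hNk _ hq, zero_mul]
    · -- B ^ ((n-1)/ℓ) ≠ 0
      intro h0
      rw [← hB, hBU, hcommU.mul_pow, ← pow_mul] at h0
      simp only [Nat.add_sub_cancel] at h0
      have hNz : N ^ (ℓ * ((n - 1) / ℓ)) = 0 :=
        ((hUnit.pow _).mul_left_eq_zero).mp h0
      exact hNk' _ (by
        have h5 := Nat.div_mul_le_self (n - 1) ℓ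
        have h4 : ℓ * ((n - 1) / ℓ) = ((n - 1) / ℓ) * ℓ := mul_comm _ _
        omega) hNz
end

section
/- Let Ω ⊆ ℂ be a domain, A an n×n complex matrix with σ(A) ⊂ Ω, and f ∈ O(Ω) non-constant. If the minimal polynomial of A is ∏_{λ ∈ σ(A)} (t - λ)^{m(λ)}, then the minimal polynomial of f(A) (defined via the holomorphic functional calculus) is ∏_{ν ∈ f(σ(A))} (t - ν)^{k(ν)}, where k(ν) = max{ ⌊(m(λ)-1)/(ord_λ f' + 1)⌋ + 1 : λ ∈ σ(A) ∩ f^{-1}{ν} }. -/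
/-!
Since `f(A) = P(A)`, a polynomial `Q` annihilates `f(A)` iff the minimal polynomial
`∏ (X - λ) ^ m(λ)` of `A` divides `Q ∘ P`. At `λ` only the factor `(X - ν) ^ r` of `Q` at
`ν = P(λ)` matters, because the rest of `Q ∘ P` does not vanish at `λ`; and `(X - λ) ^ m(λ)` divides
`(P - ν) ^ r` iff `r ≥ ⌊(m(λ) - 1) / (ord_λ f' + 1)⌋ + 1`, since `P - ν` vanishes at `λ` to order
exactly `ord_λ f' + 1` when `ord_λ f' + 1 < m(λ)` and to order at least `m(λ)` otherwise.
The minimal polynomial of `f(A)` therefore carries at `ν` the largest of these exponents.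
-/

open Polynomial

theorem Finset.sup_eq_csSup_image {ι α : Type*} [ConditionallyCompleteLinearOrderBot α]
    (s : Finset ι) (f : ι → α) : s.sup f = sSup (f '' s) := by
  rcases s.eq_empty_or_nonempty with rfl | hs
  · simp
  · rw [← Finset.sup'_eq_sup hs, Finset.sup'_eq_csSup_image]

namespace Polynomial

section CommRing

variable {R : Type*} [CommRing R]

theorem iterate_derivative_succ_sub_C (P : R[X]) (c : R) (j : ℕ) :
    derivative^[j + 1] (P - C c) = derivative^[j + 1] P := by
  rw [iterate_derivative_sub, iterate_derivative_C j.succ_pos, sub_zero]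

variable [IsDomain R]

theorem rootMultiplicity_pow (p : R[X]) (a : R) (r : ℕ) :
    (p ^ r).rootMultiplicity a = r * p.rootMultiplicity a := by
  classical
  rw [← count_roots, roots_pow, Multiset.count_nsmul, count_roots]

theorem Splits.dvd_iff_forall_pow_rootMultiplicity_dvd {M g : R[X]} (hM : M.Splits)
    (hMm : M.Monic) : M ∣ g ↔ ∀ a, (X - C a) ^ M.rootMultiplicity a ∣ g := by
  classical
  refine ⟨fun h a => (pow_rootMultiplicity_dvd M a).trans h, fun h => ?_⟩
  rcases eq_or_ne g 0 with rfl | hg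
  · exact dvd_zero M
  rw [hM.eq_prod_roots_of_monic hMm, Multiset.prod_X_sub_C_dvd_iff_le_roots hg,
    Multiset.le_iff_count]
  intro a
  rw [count_roots, count_roots]
  exact (le_rootMultiplicity_iff hg).2 (h a)

variable [CharZero R] {P : R[X]} {a : R}

theorem pow_dvd_sub_C_eval {n : ℕ} (h : ∀ j < n, (derivative^[j + 1] P).eval a = 0) :
    (X - C a) ^ (n + 1) ∣ P - C (P.eval a) := by
  rcases eq_or_ne (P - C (P.eval a)) 0 with hg | hg
  · rw [hg]
    exact dvd_zero _
  refine (le_rootMultiplicity_iff hg).1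
    ((lt_rootMultiplicity_iff_isRoot_iterate_derivative hg).2 fun j hj => ?_)
  rcases j with _ | j
  · simp
  · rw [IsRoot, iterate_derivative_succ_sub_C]
    exact h j (by omega)

theorem rootMultiplicity_sub_C_eval {d : ℕ} (h : ∀ j < d, (derivative^[j + 1] P).eval a = 0)
    (hd : (derivative^[d + 1] P).eval a ≠ 0) :
    (P - C (P.eval a)).rootMultiplicity a = d + 1 := by
  have hg : P - C (P.eval a) ≠ 0 := fun hg => hd (by
    rw [← iterate_derivative_succ_sub_C P (P.eval a), hg, iterate_derivative_zero, eval_zero])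
  refine le_antisymm (not_lt.1 fun hlt => hd ?_)
    ((le_rootMultiplicity_iff hg).2 (pow_dvd_sub_C_eval h))
  rw [← iterate_derivative_succ_sub_C P (P.eval a)]
  exact (lt_rootMultiplicity_iff_isRoot_iterate_derivative hg).1 hlt _ le_rfl

/-- `d` is the order of vanishing of `P'` at `a` as far as the derivatives of order `< m` see it. -/
theorem pow_dvd_pow_sub_C_eval_iff {m d : ℕ} (hm : 1 ≤ m)
    (hvan : ∀ j < d, j + 1 < m → (derivative^[j + 1] P).eval a = 0)
    (hd : d + 1 < m → (derivative^[d + 1] P).eval a ≠ 0) (r : ℕ) :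
    (X - C a) ^ m ∣ (P - C (P.eval a)) ^ r ↔ (m - 1) / (d + 1) + 1 ≤ r := by
  rcases le_or_gt m (d + 1) with hmd | hmd
  · have hdvd : (X - C a) ^ m ∣ P - C (P.eval a) := by
      have := pow_dvd_sub_C_eval (n := m - 1) fun j hj => hvan j (by omega) (by omega)
      rwa [Nat.sub_add_cancel hm] at this
    rw [Nat.div_eq_of_lt (by omega)]
    rcases r with _ | r
    · refine iff_of_false (fun h => ?_) (by omega)
      rw [pow_zero] at h
      exact not_isUnit_X_sub_C a ((isUnit_pow_iff (by omega)).1 (isUnit_of_dvd_one h))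
    · exact iff_of_true (hdvd.trans (dvd_pow_self _ r.succ_ne_zero)) (by omega)
  · have hs := rootMultiplicity_sub_C_eval (fun j hj => hvan j hj (by omega)) (hd hmd)
    have hg : P - C (P.eval a) ≠ 0 := fun hg => by simp [hg] at hs
    rw [← le_rootMultiplicity_iff (pow_ne_zero r hg), rootMultiplicity_pow, hs,
      Nat.add_one_le_iff, Nat.div_lt_iff_lt_mul d.add_one_pos]
    omega

end CommRing

variable {K : Type*} [Field K]

theorem isCoprime_X_sub_C_of_eval_ne_zero {p : K[X]} {a : K} (h : p.eval a ≠ 0) :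
    IsCoprime (X - C a) p :=
  (irreducible_X_sub_C a).coprime_iff_not_dvd.2 (mt dvd_iff_isRoot.1 h)

theorem pow_dvd_comp_iff {Q : K[X]} (hQ : Q ≠ 0) (P : K[X]) (a : K) (m : ℕ) :
    (X - C a) ^ m ∣ Q.comp P ↔
      (X - C a) ^ m ∣ (P - C (P.eval a)) ^ Q.rootMultiplicity (P.eval a) := by
  obtain ⟨h, hQh, hh⟩ := Q.exists_eq_pow_rootMultiplicity_mul_and_not_dvd hQ (P.eval a)
  have hcop : IsCoprime ((X - C a) ^ m) (h.comp P) := by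
    refine (isCoprime_X_sub_C_of_eval_ne_zero ?_).pow_left
    rw [eval_comp]
    exact fun h0 => hh (dvd_iff_isRoot.2 h0)
  conv_lhs => rw [hQh, mul_comp, pow_comp, sub_comp, X_comp, C_comp]
  exact ⟨hcop.dvd_of_dvd_mul_right, fun hd => hd.mul_right _⟩

end Polynomial

theorem Matrix.mem_spectrum_iff_isRoot_minpoly {n K : Type*} [Fintype n] [DecidableEq n]
    [Field K] (A : Matrix n n K) (μ : K) : μ ∈ spectrum K A ↔ (minpoly K A).IsRoot μ := by
  rw [← AlgEquiv.spectrum_eq (Matrix.toLinAlgEquiv (Pi.basisFun K n)) A,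
    ← Module.End.hasEigenvalue_iff_mem_spectrum, Module.End.hasEigenvalue_iff_isRoot,
    minpoly.algEquiv_eq]

section PolynomialCalculus

variable {K E : Type*} [Field K] [Ring E] [Algebra K E] {A : E}

theorem isIntegral_aeval (hA : IsIntegral K A) (P : K[X]) : IsIntegral K (aeval A P) :=
  .of_mem_of_fg _ hA.fg_adjoin_singleton _ (P.aeval_mem_adjoin_singleton K A)

theorem aeval_aeval_eq_zero_iff (hsplit : (minpoly K A).Splits) (hA : IsIntegral K A)
    {Q : K[X]} (hQ : Q ≠ 0) (P : K[X]) :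
    aeval (aeval A P) Q = 0 ↔ ∀ a, (X - C a) ^ (minpoly K A).rootMultiplicity a ∣
      (P - C (P.eval a)) ^ Q.rootMultiplicity (P.eval a) := by
  rw [← aeval_comp, ← minpoly.dvd_iff,
    hsplit.dvd_iff_forall_pow_rootMultiplicity_dvd (minpoly.monic hA)]
  exact forall_congr' fun a => pow_dvd_comp_iff hQ P a _

theorem minpoly_aeval_eq_prod [DecidableEq K] (hsplit : (minpoly K A).Splits)
    (hA : IsIntegral K A) (P : K[X]) (e : K → ℕ)
    (he : ∀ a ∈ (minpoly K A).roots, ∀ r, (X - C a) ^ (minpoly K A).rootMultiplicity a ∣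
      (P - C (P.eval a)) ^ r ↔ e a ≤ r) :
    minpoly K (aeval A P) = ∏ ν ∈ (minpoly K A).roots.toFinset.image P.eval,
      (X - C ν) ^ ((minpoly K A).roots.toFinset.filter (P.eval · = ν)).sup e := by
  set S := (minpoly K A).roots.toFinset
  set Q₀ := ∏ ν ∈ S.image P.eval, (X - C ν) ^ (S.filter (P.eval · = ν)).sup e
  have hann (Q : K[X]) (hQ : Q ≠ 0) :
      aeval (aeval A P) Q = 0 ↔ ∀ a ∈ S, e a ≤ Q.rootMultiplicity (P.eval a) := by
    rw [aeval_aeval_eq_zero_iff hsplit hA hQ]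
    refine ⟨fun h a ha => (he a (Multiset.mem_toFinset.1 ha) _).1 (h a), fun h a => ?_⟩
    by_cases ha : a ∈ S
    · exact (he a (Multiset.mem_toFinset.1 ha) _).2 (h a ha)
    · rw [rootMultiplicity_eq_zero fun hr => ha ?_, pow_zero]
      · exact one_dvd _
      · exact Multiset.mem_toFinset.2 ((mem_roots (minpoly.ne_zero hA)).2 hr)
  have hQ₀ : Q₀.Monic := monic_prod_of_monic _ _ fun ν _ => (monic_X_sub_C ν).pow _
  have hB := isIntegral_aeval hA P
  refine eq_of_monic_of_associated (minpoly.monic hB) hQ₀ (associated_of_dvd_dvd ?_ ?_)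
  · refine minpoly.dvd K _ ((hann Q₀ hQ₀.ne_zero).2 fun a ha => ?_)
    have hdvd : (X - C (P.eval a)) ^ (S.filter (P.eval · = P.eval a)).sup e ∣ Q₀ :=
      Finset.dvd_prod_of_mem (fun ν => (X - C ν) ^ (S.filter (P.eval · = ν)).sup e)
        (Finset.mem_image_of_mem _ ha)
    have hmem : a ∈ S.filter (P.eval · = P.eval a) := Finset.mem_filter.2 ⟨ha, rfl⟩
    exact (Finset.le_sup hmem).trans ((le_rootMultiplicity_iff hQ₀.ne_zero).2 hdvd)
  · refine Finset.prod_dvd_of_coprime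
      (fun ν _ μ _ h => (pairwise_coprime_X_sub_C Function.injective_id h).pow) fun ν _ => ?_
    have hN := minpoly.ne_zero hB
    refine (le_rootMultiplicity_iff hN).1 (Finset.sup_le fun a hfa => ?_)
    obtain ⟨ha, rfl⟩ := Finset.mem_filter.1 hfa
    exact (hann _ hN).1 (minpoly.aeval K _) a ha

end PolynomialCalculus

theorem minpoly_holomorphic_functional_calculus_general
    {n : ℕ} (A : Matrix (Fin n) (Fin n) ℂ)
    (hfin : (spectrum ℂ A).Finite)
    (f : ℂ → ℂ)
    (ord : ℂ → ℕ)
    (hord : ∀ lam ∈ spectrum ℂ A,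
      (∀ j < ord lam, iteratedDeriv j (deriv f) lam = 0) ∧
        iteratedDeriv (ord lam) (deriv f) lam ≠ 0)
    (P : ℂ[X])
    (hP : ∀ lam ∈ spectrum ℂ A, ∀ j < (minpoly ℂ A).rootMultiplicity lam,
      (Polynomial.derivative^[j] P).eval lam = iteratedDeriv j f lam) :
    minpoly ℂ (aeval A P) =
      ∏ ν ∈ hfin.toFinset.image f,
        (X - C ν) ^
          sSup {q : ℕ | ∃ lam ∈ spectrum ℂ A, f lam = ν ∧
            q = ((minpoly ℂ A).rootMultiplicity lam - 1) / (ord lam + 1) + 1} := by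
  classical
  set M := minpoly ℂ A
  have hA : IsIntegral ℂ A := Algebra.IsIntegral.isIntegral A
  have hroots (lam : ℂ) : lam ∈ M.roots ↔ lam ∈ spectrum ℂ A := by
    rw [mem_roots (minpoly.ne_zero hA), A.mem_spectrum_iff_isRoot_minpoly]
  have hm (lam) (hl : lam ∈ spectrum ℂ A) : 1 ≤ M.rootMultiplicity lam :=
    (rootMultiplicity_pos (minpoly.ne_zero hA)).2 ((A.mem_spectrum_iff_isRoot_minpoly lam).1 hl)
  have hPf (lam) (hl : lam ∈ spectrum ℂ A) : P.eval lam = f lam := by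
    simpa using hP lam hl 0 (hm lam hl)
  have hP' (lam) (hl : lam ∈ spectrum ℂ A) (j) (hj : j + 1 < M.rootMultiplicity lam) :
      (derivative^[j + 1] P).eval lam = iteratedDeriv j (deriv f) lam := by
    rw [hP lam hl (j + 1) hj, iteratedDeriv_succ']
  rw [minpoly_aeval_eq_prod (IsAlgClosed.splits M) hA P
    (fun lam => (M.rootMultiplicity lam - 1) / (ord lam + 1) + 1) fun lam hl => by
      rw [hroots] at hl
      exact pow_dvd_pow_sub_C_eval_iff (hm lam hl)
        (fun j hj hjm => (hP' lam hl j hjm).trans ((hord lam hl).1 j hj))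
        (fun hd => (hP' lam hl _ hd).trans_ne (hord lam hl).2)]
  have hS : M.roots.toFinset = hfin.toFinset := by ext; simp [hroots]
  rw [hS, Finset.image_congr fun lam hl => hPf lam (hfin.mem_toFinset.1 hl)]
  refine Finset.prod_congr rfl fun ν _ => congrArg _ ?_
  rw [Finset.filter_congr fun lam hl => by rw [hPf lam (hfin.mem_toFinset.1 hl)],
    Finset.sup_eq_csSup_image]
  congr 1
  ext q
  simp [and_assoc, eq_comm]

/-- minimal polynomial of `f(A)` under the holomorphic functional
calculus.  Here `m λ` is the multiplicity of `λ` in the minimal polynomial of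
`A`, `ord λ` is the order of vanishing of `f'` at `λ` (specified by the
hypothesis `hord`), and `f(A)` is realized as `P(A)` for any polynomial `P`
whose derivatives match those of `f` at each eigenvalue up to order `m λ - 1`. -/
theorem minpoly_holomorphic_functional_calculus
    (Ω : Set ℂ) (hΩo : IsOpen Ω) (hΩc : IsConnected Ω)
    {n : ℕ} (hn : 2 ≤ n) (A : Matrix (Fin n) (Fin n) ℂ)
    (hspec : spectrum ℂ A ⊆ Ω) (hfin : (spectrum ℂ A).Finite)
    (f : ℂ → ℂ) (hf : DifferentiableOn ℂ f Ω)
    (hnc : ¬ ∃ c : ℂ, ∀ z ∈ Ω, f z = c)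
    (ord : ℂ → ℕ)
    (hord : ∀ lam ∈ spectrum ℂ A,
      (∀ j < ord lam, iteratedDeriv j (deriv f) lam = 0) ∧
        iteratedDeriv (ord lam) (deriv f) lam ≠ 0)
    (P : ℂ[X])
    (hP : ∀ lam ∈ spectrum ℂ A, ∀ j < (minpoly ℂ A).rootMultiplicity lam,
      (Polynomial.derivative^[j] P).eval lam = iteratedDeriv j f lam) :
    minpoly ℂ (aeval A P) =
      ∏ ν ∈ hfin.toFinset.image f,
        (X - C ν) ^
          sSup {q : ℕ | ∃ lam ∈ spectrum ℂ A, f lam = ν ∧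
            q = ((minpoly ℂ A).rootMultiplicity lam - 1) / (ord lam + 1) + 1} :=
  minpoly_holomorphic_functional_calculus_general A hfin f ord hord P hP
end
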